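/- arXiv:1709.06382 — 2 statements merged into one kernel-verified Lean document; each statement's English description precedes it below -/
import Mathlib

section
/- Let (A,φ) with operators T_i, T_i^*, T_i′ satisfy conditions (C1), (C3) and (C4). If i ∈ ℕ^r is a tuple whose kernel ker i contains a singleton block, then φ(T_{i(1)}^{ε(1)} ⋯ T_{i(r)}^{ε(r)}) = 0 for every ε ∈ {1,*,′}^r. -/
/-!
Sort the word `T_{i(1)}^{ε(1)} ⋯ T_{i(r)}^{ε(r)}` by index with insertion sort: by (C4) each
transposition of two adjacent letters with distinct indices only costs a real scalar, and letters
of equal index are never transposed. The kernel of the sorted word is an interval partition, so by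
(C3) `φ` factors over its blocks, and the block of the singleton index is a single letter, whose
mean vanishes by (C1).
-/

open Filter
open scoped BigOperators Classical

/-- The three kinds of labels `1, ∗, ′` for the operators. -/
inductive Eps : Type
  | one
  | star
  | prime
  deriving DecidableEq

/-- `Teps T T' ε i` is the operator `T_i^ε`. -/
def Teps {A : Type*} [Ring A] [StarRing A] (T T' : ℕ → A) : Eps → ℕ → A
  | Eps.one, i => T i
  | Eps.star, i => star (T i)
  | Eps.prime, i => T' i

/-- The ordered product `T_{i(1)}^{ε(1)} ⋯ T_{i(r)}^{ε(r)}`. -/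
def prodT {A : Type*} [Ring A] [StarRing A] (T T' : ℕ → A) {r : ℕ}
    (ε : Fin r → Eps) (i : Fin r → ℕ) : A :=
  (List.ofFn fun j => Teps T T' (ε j) (i j)).prod

/-- `ker i = π` for a set partition `π` of `[r]`, encoded as a setoid on `Fin r`. -/
def kerEq {r : ℕ} (i : Fin r → ℕ) (π : Setoid (Fin r)) : Prop :=
  ∀ k l, i k = i l ↔ π.r k l

/-- Condition (C1): vanishing means and vanishing of all second mixed moments except
`φ(T_i^* T_i)` and `φ(T_i^* T_i′)`. -/
def C1 {A : Type*} [Ring A] [Algebra ℂ A] [StarRing A]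
    (φ : A →ₗ[ℂ] ℂ) (T T' : ℕ → A) : Prop :=
  (∀ (i : ℕ) (e : Eps), φ (Teps T T' e i) = 0) ∧
  (∀ (i : ℕ) (e e' : Eps), ¬ (e = Eps.star ∧ (e' = Eps.one ∨ e' = Eps.prime)) →
    φ (Teps T T' e i * Teps T T' e' i) = 0)

/-- Condition (C2): uniform bounds for moments with a fixed kernel. -/
def C2 {A : Type*} [Ring A] [Algebra ℂ A] [StarRing A]
    (φ : A →ₗ[ℂ] ℂ) (T T' : ℕ → A) : Prop :=
  ∀ (r : ℕ) (π : Setoid (Fin r)), ∃ ρ : ℝ, 0 ≤ ρ ∧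
    ∀ (ε : Fin r → Eps) (i : Fin r → ℕ), kerEq i π →
      ‖φ (prodT T T' ε i)‖ ≤ ρ

/-- Condition (C3): the state factors over interval partitions.  A word whose kernel is an
interval partition is presented as a concatenation of groups, each group having a constant
index, different groups having distinct indices. -/
def C3 {A : Type*} [Ring A] [Algebra ℂ A] [StarRing A]
    (φ : A →ₗ[ℂ] ℂ) (T T' : ℕ → A) : Prop :=
  ∀ G : List (List (Eps × ℕ)),
    (∀ g ∈ G, g ≠ [] ∧ ∃ m, ∀ x ∈ g, Prod.snd x = m) →
    (G.Pairwise fun g₁ g₂ => ∀ x₁ ∈ g₁, ∀ x₂ ∈ g₂, Prod.snd x₁ ≠ Prod.snd x₂) →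
    φ ((G.flatten.map fun x => Teps T T' x.1 x.2).prod) =
      (G.map fun g => φ ((g.map fun x => Teps T T' x.1 x.2).prod)).prod

/-- Condition (C4): commutation relations `T_i^ε T_j^{ε'} = Q_{ε,ε'}(i,j) T_j^{ε'} T_i^ε`
for `i ≠ j`. -/
def C4 {A : Type*} [Ring A] [Algebra ℂ A] [StarRing A]
    (T T' : ℕ → A) (Q : Eps → Eps → ℕ → ℕ → ℝ) : Prop :=
  ∀ (i j : ℕ), i ≠ j → ∀ (e e' : Eps),
    Teps T T' e i * Teps T T' e' j = (Q e e' i j : ℂ) • (Teps T T' e' j * Teps T T' e i)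

/-- A pair partition of `[m]`, encoded as a fixed-point-free involution `p`:
the blocks are the sets `{x, p x}`. -/
def IsPairing {m : ℕ} (p : Fin m → Fin m) : Prop :=
  ∀ x, p (p x) = x ∧ p x ≠ x

/-- A coloring `f : π → {±1}` of the blocks (encoded pointwise, constant on blocks;
`true` stands for the color `1`, `false` for the color `-1`). -/
def IsColoring {m : ℕ} (p : Fin m → Fin m) (f : Fin m → Bool) : Prop :=
  ∀ x, f (p x) = f x

/-- Membership of a colored pair partition in `P^B_{2,ε}`: on each block `{z, w}` with
`z < w` one has `ε(z) = ∗` and `ε(w) = 1` resp. `′` according to the color. -/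
def EpsCompat {m : ℕ} (ε : Fin m → Eps) (p : Fin m → Fin m) (f : Fin m → Bool) : Prop :=
  ∀ x, x < p x → ε x = Eps.star ∧ ε (p x) = (if f x then Eps.one else Eps.prime)

/-- `ker i = π` for the pair partition encoded by the involution `p`. -/
def kerPair {m : ℕ} (i : Fin m → ℕ) (p : Fin m → Fin m) : Prop :=
  ∀ k l, i k = i l ↔ (k = l ∨ p k = l)

/-- The coefficient `Ξ(π_f, i)`: a product of commutation coefficients over crossing pairs
of blocks and over nesting pairs of blocks.  Here `a, b` run over left legs of blocks. -/
noncomputable def Xi (Q : Eps → Eps → ℕ → ℕ → ℝ) {m : ℕ}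
    (p : Fin m → Fin m) (f : Fin m → Bool) (i : Fin m → ℕ) : ℝ :=
  (∏ a : Fin m, ∏ b : Fin m,
    if a < p a ∧ b < p b ∧ a < b ∧ b < p a ∧ p a < p b then
      Q Eps.star (if f a then Eps.one else Eps.prime) (i b) (i (p a)) else 1) *
  (∏ a : Fin m, ∏ b : Fin m,
    if a < p a ∧ b < p b ∧ a < b ∧ p b < p a then
      Q Eps.star Eps.star (i a) (i b) *
        Q Eps.star (if f b then Eps.one else Eps.prime) (i a) (i (p b)) else 1)

/-- The quantity whose limit (as `N → ∞`) is `λ_{π_f}` in condition (C5):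
`N^{-n} ∑_{i ∈ [N]^{2n}, ker i = π} Ξ(π_f,i) ∏_{f=1} φ(T^*T) ∏_{f=-1} φ(T^*T')`. -/
noncomputable def Ysum {A : Type*} [Ring A] [Algebra ℂ A] [StarRing A]
    (φ : A →ₗ[ℂ] ℂ) (T T' : ℕ → A) (Q : Eps → Eps → ℕ → ℕ → ℝ)
    (n N : ℕ) (p : Fin (2 * n) → Fin (2 * n)) (f : Fin (2 * n) → Bool) : ℂ :=
  ((N : ℂ) ^ n)⁻¹ *
    ∑ i ∈ (Fintype.piFinset fun _ : Fin (2 * n) => Finset.Icc 1 N).filter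
        (fun i => kerPair i p),
      ((Xi Q p f i : ℝ) : ℂ) *
        (∏ a : Fin (2 * n),
          if a < p a ∧ f a = true then φ (star (T (i a)) * T (i (p a))) else 1) *
        (∏ a : Fin (2 * n),
          if a < p a ∧ f a = false then φ (star (T (i a)) * T' (i (p a))) else 1)

/-- The normalized sum `S_N^ε = (T_1^ε + ⋯ + T_N^ε)/√N`. -/
noncomputable def SN {A : Type*} [Ring A] [Algebra ℂ A] [StarRing A]
    (T T' : ℕ → A) (e : Eps) (N : ℕ) : A :=
  ((Real.sqrt N : ℂ))⁻¹ • ∑ k ∈ Finset.Icc 1 N, Teps T T' e k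

theorem List.exists_flatten_eq_of_pairwise_le {α β : Type*} [LinearOrder β] (f : α → β)
    {L : List α} (hL : L.Pairwise (fun a b => f a ≤ f b)) :
    ∃ G : List (List α), G.flatten = L ∧
      (∀ g ∈ G, g ≠ [] ∧ ∃ m, ∀ x ∈ g, f x = m) ∧
      G.Pairwise (fun g₁ g₂ => ∀ x₁ ∈ g₁, ∀ x₂ ∈ g₂, f x₁ < f x₂) := by
  induction L with
  | nil => exact ⟨[], rfl, by simp, .nil⟩
  | cons x L ih =>
    obtain ⟨hx, hL⟩ := List.pairwise_cons.1 hL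
    obtain ⟨G, rfl, hconst, hlt⟩ := ih hL
    clear ih hL
    cases G with
    | nil => exact ⟨[[x]], rfl, by simp, by simp⟩
    | cons g G =>
      obtain ⟨⟨hg, m, hm⟩, hconst⟩ := List.forall_mem_cons.1 hconst
      obtain ⟨y, hy⟩ := List.exists_mem_of_ne_nil g hg
      simp only [List.flatten_cons, List.mem_append, List.mem_flatten] at hx
      simp only [List.pairwise_cons] at hlt
      by_cases hxm : f x = m
      · refine ⟨(x :: g) :: G, rfl, ?_, ?_⟩
        · refine List.forall_mem_cons.2 ⟨⟨by simp, m, ?_⟩, hconst⟩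
          simpa [hxm] using hm
        · simp only [List.pairwise_cons, List.mem_cons]
          grind
      · refine ⟨[x] :: g :: G, rfl, ?_, ?_⟩
        · simp only [List.forall_mem_cons]
          exact ⟨⟨by simp, f x, by simp⟩, ⟨hg, m, hm⟩, hconst⟩
        · simp only [List.pairwise_cons, List.mem_cons]
          grind

section Word

variable {A : Type*} [Ring A] [StarRing A] (T T' : ℕ → A)

def wordProd (L : List (Eps × ℕ)) : A :=
  (L.map fun x => Teps T T' x.1 x.2).prod

@[simp]
lemma wordProd_cons (x : Eps × ℕ) (L : List (Eps × ℕ)) :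
    wordProd T T' (x :: L) = Teps T T' x.1 x.2 * wordProd T T' L := by
  simp [wordProd]

lemma prodT_eq_wordProd {r : ℕ} (ε : Fin r → Eps) (i : Fin r → ℕ) :
    prodT T T' ε i = wordProd T T' (List.ofFn fun j => (ε j, i j)) := by
  simp only [prodT, wordProd, List.map_ofFn]
  rfl

abbrev IndexLE (x y : Eps × ℕ) : Prop := x.2 ≤ y.2

variable [Algebra ℂ A] {T T'} {Q : Eps → Eps → ℕ → ℕ → ℝ}

lemma exists_wordProd_cons_eq_smul_orderedInsert (hC4 : C4 T T' Q) (x : Eps × ℕ)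
    (L : List (Eps × ℕ)) :
    ∃ c : ℝ, wordProd T T' (x :: L) = (c : ℂ) • wordProd T T' (L.orderedInsert IndexLE x) := by
  induction L with
  | nil => exact ⟨1, by simp⟩
  | cons y L ih =>
    by_cases hxy : x.2 ≤ y.2
    · exact ⟨1, by simp [hxy]⟩
    · obtain ⟨c, hc⟩ := ih
      refine ⟨Q x.1 y.1 x.2 y.2 * c, ?_⟩
      have hswap := hC4 x.2 y.2 (by omega) x.1 y.1
      rw [List.orderedInsert_cons, if_neg hxy, wordProd_cons, wordProd_cons, ← mul_assoc,
        hswap, smul_mul_assoc, mul_assoc, ← wordProd_cons, hc, wordProd_cons, mul_smul_comm,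
        smul_smul, Complex.ofReal_mul]

lemma exists_wordProd_eq_smul_insertionSort (hC4 : C4 T T' Q) (L : List (Eps × ℕ)) :
    ∃ c : ℝ, wordProd T T' L = (c : ℂ) • wordProd T T' (L.insertionSort IndexLE) := by
  induction L with
  | nil => exact ⟨1, by simp⟩
  | cons x L ih =>
    obtain ⟨c, hc⟩ := ih
    obtain ⟨c', hc'⟩ := exists_wordProd_cons_eq_smul_orderedInsert hC4 x (L.insertionSort IndexLE)
    refine ⟨c * c', ?_⟩
    rw [List.insertionSort_cons, wordProd_cons, hc, mul_smul_comm, ← wordProd_cons, hc',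
      smul_smul, Complex.ofReal_mul]

variable {φ : A →ₗ[ℂ] ℂ}

lemma map_wordProd_eq_zero_of_countP_eq_one (hmean : ∀ i e, φ (Teps T T' e i) = 0)
    (hC3 : C3 φ T T') {L : List (Eps × ℕ)} (hL : L.Pairwise IndexLE) {m : ℕ}
    (hm : L.countP (fun x => x.2 = m) = 1) :
    φ (wordProd T T' L) = 0 := by
  obtain ⟨G, rfl, hconst, hlt⟩ := List.exists_flatten_eq_of_pairwise_le Prod.snd hL
  obtain ⟨x, hxL, hxm⟩ := List.countP_pos_iff.1 (hm ▸ Nat.one_pos)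
  obtain ⟨g, hgG, hxg⟩ := List.mem_flatten.1 hxL
  obtain ⟨-, m', hm'⟩ := hconst g hgG
  have hgm : ∀ y ∈ g, y.2 = m := fun y hy =>
    (hm' y hy).trans ((hm' x hxg).symm.trans (of_decide_eq_true hxm))
  have hg_len : g.length ≤ 1 := by
    rw [← hm, ← List.countP_eq_length.2 fun y hy => decide_eq_true (hgm y hy),
      List.countP_flatten]
    exact List.single_le_sum (fun _ _ => Nat.zero_le _) _ (List.mem_map_of_mem hgG)
  obtain ⟨y, rfl⟩ : ∃ y, g = [y] := by
    cases g with
    | nil => simp at hxg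
    | cons y g => exact ⟨y, List.eq_nil_of_length_eq_zero (by simpa using hg_len) ▸ rfl⟩
  rw [wordProd, hC3 G hconst (hlt.imp fun h x₁ hx₁ x₂ hx₂ => (h x₁ hx₁ x₂ hx₂).ne)]
  exact List.prod_eq_zero (List.mem_map.2 ⟨[y], hgG, by simpa using hmean y.2 y.1⟩)

end Word

lemma List.countP_ofFn_eq_one {α : Type*} {r : ℕ} (f : Fin r → α) (p : α → Prop)
    [DecidablePred p] (k : Fin r) (hk : ∀ l, p (f l) ↔ l = k) :
    (List.ofFn f).countP (fun x => p x) = 1 := by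
  rw [List.ofFn_eq_map, List.countP_map, ← List.count_eq_one_of_mem (List.nodup_finRange r)
    (List.mem_finRange k)]
  exact List.countP_congr fun l _ => by simpa using hk l

theorem stmt2_general {A : Type*} [Ring A] [Algebra ℂ A] [StarRing A]
    (φ : A →ₗ[ℂ] ℂ) (T T' : ℕ → A) (Q : Eps → Eps → ℕ → ℕ → ℝ)
    (hC1 : C1 φ T T') (hC3 : C3 φ T T') (hC4 : C4 T T' Q)
    (r : ℕ) (i : Fin r → ℕ)
    (hsing : ∃ k : Fin r, ∀ l : Fin r, l ≠ k → i l ≠ i k) :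
    ∀ ε : Fin r → Eps, φ (prodT T T' ε i) = 0 := by
  intro ε
  obtain ⟨k, hk⟩ := hsing
  set L := List.ofFn fun j => (ε j, i j)
  have hcount : L.countP (fun x => x.2 = i k) = 1 :=
    List.countP_ofFn_eq_one _ (fun x : Eps × ℕ => x.2 = i k) k
      fun l => ⟨fun h => by_contra fun hl => hk l hl h, fun h => h ▸ rfl⟩
  obtain ⟨c, hc⟩ := exists_wordProd_eq_smul_insertionSort hC4 L
  rw [prodT_eq_wordProd, hc, map_smul,
    map_wordProd_eq_zero_of_countP_eq_one hC1.1 hC3 (List.pairwise_insertionSort _ _)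
      (((List.perm_insertionSort _ L).countP_eq _).trans hcount), smul_zero]

/-- under conditions (C1), (C3), (C4), if the kernel of the tuple `i`
contains a singleton block, then `φ(T_{i(1)}^{ε(1)} ⋯ T_{i(r)}^{ε(r)}) = 0` for every `ε`. -/
theorem stmt2 {A : Type*} [Ring A] [Algebra ℂ A] [StarRing A]
    (φ : A →ₗ[ℂ] ℂ) (hφ1 : φ 1 = 1) (T T' : ℕ → A) (Q : Eps → Eps → ℕ → ℕ → ℝ)
    (hC1 : C1 φ T T') (hC3 : C3 φ T T') (hC4 : C4 T T' Q)
    (r : ℕ) (i : Fin r → ℕ)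
    (hsing : ∃ k : Fin r, ∀ l : Fin r, l ≠ k → i l ≠ i k) :
    ∀ ε : Fin r → Eps, φ (prodT T T' ε i) = 0 :=
  stmt2_general φ T T' Q hC1 hC3 hC4 r i hsing
end

section
/- With the Jordan–Wigner matrix model in M₂(ℝ)^{⊗N}, for all 1 ≤ j < i ≤ N one has: T_{N,i}^* T_{N,j}^* = Q(i,j)^{−1} · T_{N,j}^* T_{N,i}^*, T_{N,i}^* T_{N,j} = Q(i,j) · T_{N,j} T_{N,i}^*, and T_{N,i}^* T′_{N,j} = Q(i,j)² Q̃(i,j) · T′_{N,j} T_{N,i}^*. -/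
open Matrix
open scoped Kronecker BigOperators Classical

/-- The diagonal matrix `σ_x = [[1,0],[0,x]]`. -/
def sigmaM (x : ℝ) : Matrix (Fin 2) (Fin 2) ℝ := !![1, 0; 0, x]

/-- The matrix `γ_x = [[0,0],[x,0]]`. -/
def gammaM (x : ℝ) : Matrix (Fin 2) (Fin 2) ℝ := !![0, 0; x, 0]

/-- The iterated Kronecker product realizing `M₂(ℝ)^{⊗k}` inside `M_{2^k}(ℝ)`. -/
def tensorFold : (k : ℕ) → (Fin k → Matrix (Fin 2) (Fin 2) ℝ) →
    Matrix (Fin (2 ^ k)) (Fin (2 ^ k)) ℝ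
  | 0, _ => 1
  | k + 1, a =>
      Matrix.reindex (finProdFinEquiv.trans (finCongr (pow_succ 2 k).symm))
        (finProdFinEquiv.trans (finCongr (pow_succ 2 k).symm))
        ((tensorFold k fun j => a j.castSucc) ⊗ₖ a (Fin.last k))

/-- The Jordan–Wigner matrix
`T_{N,i} = σ_{Q(1,i)} ⊗ ⋯ ⊗ σ_{Q(i-1,i)} ⊗ γ_1 ⊗ σ_1 ⊗ ⋯ ⊗ σ_1` (slot `k` of the tensor
product corresponds to the index `k+1 ∈ {1,…,N}`). -/
def TN (N : ℕ) (Q : ℕ → ℕ → ℝ) (i : ℕ) : Matrix (Fin (2 ^ N)) (Fin (2 ^ N)) ℝ :=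
  tensorFold N fun k =>
    if (k : ℕ) + 1 < i then sigmaM (Q ((k : ℕ) + 1) i)
    else if (k : ℕ) + 1 = i then gammaM 1
    else sigmaM 1

/-- The extended Jordan–Wigner matrix
`T'_{N,i} = σ_{Q̃(1,i)} ⊗ ⋯ ⊗ σ_{Q̃(i-1,i)} ⊗ γ_{Ψ_i} ⊗ σ_{Q(i+1,i)Q̃(i+1,i)} ⊗ ⋯ ⊗ σ_{Q(N,i)Q̃(N,i)}`. -/
def TN' (N : ℕ) (Q Qt : ℕ → ℕ → ℝ) (Ψ : ℕ → ℝ) (i : ℕ) :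
    Matrix (Fin (2 ^ N)) (Fin (2 ^ N)) ℝ :=
  tensorFold N fun k =>
    if (k : ℕ) + 1 < i then sigmaM (Qt ((k : ℕ) + 1) i)
    else if (k : ℕ) + 1 = i then gammaM (Ψ i)
    else sigmaM (Q ((k : ℕ) + 1) i * Qt ((k : ℕ) + 1) i)

/-- The functional `φ_N(a_1 ⊗ ⋯ ⊗ a_N) = ∏ (a_k)_{11}`: the top-left entry. -/
def phiN (N : ℕ) (M : Matrix (Fin (2 ^ N)) (Fin (2 ^ N)) ℝ) : ℝ :=
  M ⟨0, pow_pos (by norm_num) N⟩ ⟨0, pow_pos (by norm_num) N⟩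
private lemma tensorFold_mul (k : ℕ) (a b : Fin k → Matrix (Fin 2) (Fin 2) ℝ) :
    tensorFold k a * tensorFold k b = tensorFold k fun m => a m * b m := by
  induction k with
  | zero => simp [tensorFold]
  | succ k ih =>
      simp only [tensorFold, reindex_apply, submatrix_mul_equiv,
        ← mul_kronecker_mul, ih]

private lemma tensorFold_transpose (k : ℕ) (a : Fin k → Matrix (Fin 2) (Fin 2) ℝ) :
    (tensorFold k a)ᵀ = tensorFold k fun m => (a m)ᵀ := by
  induction k with
  | zero => simp [tensorFold]
  | succ k ih =>
      simp only [tensorFold, reindex_apply, transpose_submatrix,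
        ← kroneckerMap_transpose, ← ih]

private lemma tensorFold_smul (k : ℕ) (a b : Fin k → Matrix (Fin 2) (Fin 2) ℝ)
    (c : Fin k → ℝ) (h : ∀ m, a m = c m • b m) :
    tensorFold k a = (∏ m, c m) • tensorFold k b := by
  induction k with
  | zero => simp [tensorFold]
  | succ k ih =>
      have h1 : (tensorFold k fun m => a m.castSucc)
          = (∏ m : Fin k, c m.castSucc) • tensorFold k fun m => b m.castSucc :=
        ih _ _ _ fun m => h m.castSucc
      simp only [tensorFold, reindex_apply, h1, h (Fin.last k), smul_kronecker,
        kronecker_smul, submatrix_smul, Fin.prod_univ_castSucc, smul_smul]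
      rw [mul_comm (c (Fin.last k))]
      rfl

private lemma tensorFold_comm (k : ℕ) (a b : Fin k → Matrix (Fin 2) (Fin 2) ℝ)
    (c : Fin k → ℝ) (h : ∀ m, a m * b m = c m • (b m * a m)) :
    tensorFold k a * tensorFold k b = (∏ m, c m) • (tensorFold k b * tensorFold k a) := by
  rw [tensorFold_mul, tensorFold_mul, tensorFold_smul _ _ _ c h]

private lemma prod_ite_one {N j : ℕ} (q : ℝ) (h1 : 1 ≤ j) (h2 : j ≤ N) :
    (∏ m : Fin N, if (m : ℕ) + 1 = j then q else 1) = q := by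
  rw [Finset.prod_eq_single_of_mem (⟨j - 1, by omega⟩ : Fin N) (Finset.mem_univ _)]
  · simp only [if_pos (by omega : j - 1 + 1 = j)]
  · intro m _ hm
    have : (m : ℕ) + 1 ≠ j := by
      intro hc; exact hm (by ext; simpa using by omega)
    simp [this]

private lemma prod_ite_two {N i j : ℕ} (q r : ℝ) (h1 : 1 ≤ j) (hji : j < i) (h2 : i ≤ N) :
    (∏ m : Fin N, if (m : ℕ) + 1 = j then q else if (m : ℕ) + 1 = i then r else 1)
      = q * r := by
  have key : ∀ m : Fin N,
      (if (m : ℕ) + 1 = j then q else if (m : ℕ) + 1 = i then r else 1)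
        = (if (m : ℕ) + 1 = j then q else 1) * (if (m : ℕ) + 1 = i then r else 1) := by
    intro m
    by_cases h : (m : ℕ) + 1 = j
    · have h' : ¬ ((m : ℕ) + 1 = i) := by omega
      simp [if_pos h, if_neg h']
    · simp [if_neg h]
  simp_rw [key]
  rw [Finset.prod_mul_distrib, prod_ite_one q h1 (by omega), prod_ite_one r (by omega) h2]

private lemma sigmaM_transpose (x : ℝ) : (sigmaM x)ᵀ = sigmaM x := by
  ext a b; fin_cases a <;> fin_cases b <;> simp [sigmaM]

private lemma gammaM_transpose (y : ℝ) : (gammaM y)ᵀ = !![0, y; 0, 0] := by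
  ext a b; fin_cases a <;> fin_cases b <;> simp [gammaM]

private lemma sigma_mul_sigma (x y : ℝ) : sigmaM x * sigmaM y = sigmaM y * sigmaM x := by
  ext a b; fin_cases a <;> fin_cases b <;>
    simp [sigmaM, Matrix.mul_apply, Fin.sum_univ_two, mul_comm]

private lemma sigma_mul_gamma (x y : ℝ) :
    sigmaM x * gammaM y = x • (gammaM y * sigmaM x) := by
  ext a b; fin_cases a <;> fin_cases b <;>
    simp [sigmaM, gammaM, Matrix.mul_apply, Fin.sum_univ_two]

private lemma sigma_mul_gammaT (x y : ℝ) (hx : x ≠ 0) :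
    sigmaM x * (gammaM y)ᵀ = x⁻¹ • ((gammaM y)ᵀ * sigmaM x) := by
  rw [gammaM_transpose]
  ext a b
  fin_cases a <;> fin_cases b <;>
    simp [sigmaM, Matrix.mul_apply, Fin.sum_univ_two] <;> field_simp

private lemma gammaT_mul_sigma (x y : ℝ) :
    (gammaM y)ᵀ * sigmaM x = x • (sigmaM x * (gammaM y)ᵀ) := by
  rw [gammaM_transpose]
  ext a b
  fin_cases a <;> fin_cases b <;>
    simp [sigmaM, Matrix.mul_apply, Fin.sum_univ_two] <;> ring

private lemma sigmaM_one : sigmaM 1 = 1 := by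
  ext a b; fin_cases a <;> fin_cases b <;> simp [sigmaM, Matrix.one_apply]

/-- commutation relations for the Jordan–Wigner matrices when `j < i`:
`T_{N,i}^* T_{N,j}^* = Q(i,j)⁻¹·T_{N,j}^* T_{N,i}^*`,
`T_{N,i}^* T_{N,j} = Q(i,j)·T_{N,j} T_{N,i}^*`, and
`T_{N,i}^* T'_{N,j} = Q(i,j)²Q̃(i,j)·T'_{N,j} T_{N,i}^*`. -/
theorem stmt11 (N : ℕ) (Q Qt : ℕ → ℕ → ℝ) (Ψ : ℕ → ℝ)
    (hQsymm : ∀ i j, Q i j = Q j i)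
    (hQne : ∀ i j, i ≠ j → Q i j ≠ 0)
    (hQtne : ∀ i j, i ≠ j → Qt i j ≠ 0)
    (i j : ℕ) (h1j : 1 ≤ j) (hji : j < i) (hiN : i ≤ N) :
    ((TN N Q i)ᵀ * (TN N Q j)ᵀ = (Q i j)⁻¹ • ((TN N Q j)ᵀ * (TN N Q i)ᵀ)) ∧
    ((TN N Q i)ᵀ * TN N Q j = Q i j • (TN N Q j * (TN N Q i)ᵀ)) ∧
    ((TN N Q i)ᵀ * TN' N Q Qt Ψ j
      = ((Q i j) ^ 2 * Qt i j) • (TN' N Q Qt Ψ j * (TN N Q i)ᵀ)) := by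
  have hQji : Q j i ≠ 0 := hQne j i (Nat.ne_of_lt hji)
  have hjN : j ≤ N := le_of_lt (lt_of_lt_of_le hji hiN)
  unfold TN TN'
  simp only [tensorFold_transpose]
  refine ⟨?_, ?_, ?_⟩
  · have hc : ∀ m : Fin N,
        (if (m : ℕ) + 1 < i then sigmaM (Q ((m : ℕ) + 1) i)
          else if (m : ℕ) + 1 = i then gammaM 1 else sigmaM 1)ᵀ *
        (if (m : ℕ) + 1 < j then sigmaM (Q ((m : ℕ) + 1) j)
          else if (m : ℕ) + 1 = j then gammaM 1 else sigmaM 1)ᵀ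
        = (if (m : ℕ) + 1 = j then (Q i j)⁻¹ else 1) •
          ((if (m : ℕ) + 1 < j then sigmaM (Q ((m : ℕ) + 1) j)
            else if (m : ℕ) + 1 = j then gammaM 1 else sigmaM 1)ᵀ *
          (if (m : ℕ) + 1 < i then sigmaM (Q ((m : ℕ) + 1) i)
            else if (m : ℕ) + 1 = i then gammaM 1 else sigmaM 1)ᵀ) := by
      intro m
      rcases lt_trichotomy ((m : ℕ) + 1) j with hm | hm | hm
      · have h1 : (m : ℕ) + 1 < i := by omega
        have h2 : ¬ ((m : ℕ) + 1 = j) := by omega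
        simp only [if_pos hm, if_pos h1, if_neg h2, sigmaM_transpose,
          sigma_mul_sigma, one_smul]
      · simp only [hm, if_pos hji, if_neg (lt_irrefl j), if_pos rfl, if_true, sigmaM_transpose]
        rw [sigma_mul_gammaT _ _ hQji, hQsymm i j]
      · have h2 : ¬ ((m : ℕ) + 1 < j) := by omega
        have h3 : ¬ ((m : ℕ) + 1 = j) := by omega
        simp only [if_neg h2, if_neg h3, sigmaM_one, transpose_one, mul_one,
          one_mul, one_smul]
    rw [tensorFold_comm N _ _ _ hc, prod_ite_one _ h1j hjN]
  · have hc : ∀ m : Fin N,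
        (if (m : ℕ) + 1 < i then sigmaM (Q ((m : ℕ) + 1) i)
          else if (m : ℕ) + 1 = i then gammaM 1 else sigmaM 1)ᵀ *
        (if (m : ℕ) + 1 < j then sigmaM (Q ((m : ℕ) + 1) j)
          else if (m : ℕ) + 1 = j then gammaM 1 else sigmaM 1)
        = (if (m : ℕ) + 1 = j then Q i j else 1) •
          ((if (m : ℕ) + 1 < j then sigmaM (Q ((m : ℕ) + 1) j)
            else if (m : ℕ) + 1 = j then gammaM 1 else sigmaM 1) *
          (if (m : ℕ) + 1 < i then sigmaM (Q ((m : ℕ) + 1) i)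
            else if (m : ℕ) + 1 = i then gammaM 1 else sigmaM 1)ᵀ) := by
      intro m
      rcases lt_trichotomy ((m : ℕ) + 1) j with hm | hm | hm
      · have h1 : (m : ℕ) + 1 < i := by omega
        have h2 : ¬ ((m : ℕ) + 1 = j) := by omega
        simp only [if_pos hm, if_pos h1, if_neg h2, sigmaM_transpose,
          sigma_mul_sigma, one_smul]
      · simp only [hm, if_pos hji, if_neg (lt_irrefl j), if_pos rfl, if_true, sigmaM_transpose]
        rw [sigma_mul_gamma, hQsymm i j]
      · have h2 : ¬ ((m : ℕ) + 1 < j) := by omega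
        have h3 : ¬ ((m : ℕ) + 1 = j) := by omega
        simp only [if_neg h2, if_neg h3, sigmaM_one, mul_one, one_mul, one_smul]
    rw [tensorFold_comm N _ _ _ hc, prod_ite_one _ h1j hjN]
  · have hc : ∀ m : Fin N,
        (if (m : ℕ) + 1 < i then sigmaM (Q ((m : ℕ) + 1) i)
          else if (m : ℕ) + 1 = i then gammaM 1 else sigmaM 1)ᵀ *
        (if (m : ℕ) + 1 < j then sigmaM (Qt ((m : ℕ) + 1) j)
          else if (m : ℕ) + 1 = j then gammaM (Ψ j)
          else sigmaM (Q ((m : ℕ) + 1) j * Qt ((m : ℕ) + 1) j))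
        = (if (m : ℕ) + 1 = j then Q i j
            else if (m : ℕ) + 1 = i then Q i j * Qt i j else 1) •
          ((if (m : ℕ) + 1 < j then sigmaM (Qt ((m : ℕ) + 1) j)
            else if (m : ℕ) + 1 = j then gammaM (Ψ j)
            else sigmaM (Q ((m : ℕ) + 1) j * Qt ((m : ℕ) + 1) j)) *
          (if (m : ℕ) + 1 < i then sigmaM (Q ((m : ℕ) + 1) i)
            else if (m : ℕ) + 1 = i then gammaM 1 else sigmaM 1)ᵀ) := by
      intro m
      rcases lt_trichotomy ((m : ℕ) + 1) j with hm | hm | hm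
      · have h1 : (m : ℕ) + 1 < i := by omega
        have h2 : ¬ ((m : ℕ) + 1 = j) := by omega
        have h4 : ¬ ((m : ℕ) + 1 = i) := by omega
        simp only [if_pos hm, if_pos h1, if_neg h2, if_neg h4, sigmaM_transpose,
          sigma_mul_sigma, one_smul]
      · simp only [hm, if_pos hji, if_neg (lt_irrefl j), if_pos rfl, if_true, sigmaM_transpose]
        rw [sigma_mul_gamma, hQsymm i j]
      · have h2 : ¬ ((m : ℕ) + 1 < j) := by omega
        have h3 : ¬ ((m : ℕ) + 1 = j) := by omega
        simp only [if_neg h2, if_neg h3]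
        rcases lt_trichotomy ((m : ℕ) + 1) i with hi' | hi' | hi'
        · have h4 : ¬ ((m : ℕ) + 1 = i) := by omega
          simp only [if_pos hi', if_neg h4, sigmaM_transpose, sigma_mul_sigma,
            one_smul]
        · simp only [hi', if_neg (lt_irrefl i), if_pos rfl, if_true]
          rw [gammaT_mul_sigma]
        · have h4 : ¬ ((m : ℕ) + 1 < i) := by omega
          have h5 : ¬ ((m : ℕ) + 1 = i) := by omega
          simp only [if_neg h4, if_neg h5, sigmaM_one, transpose_one, mul_one,
            one_mul, one_smul]
    rw [tensorFold_comm N _ _ _ hc, prod_ite_two _ _ h1j hji hiN,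
      show Q i j * (Q i j * Qt i j) = Q i j ^ 2 * Qt i j by ring]
end
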